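/- Let X and Y be separable metric spaces, let q(dy|x) be a continuous stochastic kernel on Y given X (i.e., the map x ↦ q(·|x) from X to the space of Borel probability measures on Y with the weak topology is continuous), and let g : X × Y → ℝ be lower semicontinuous with c̲ ≤ g ≤ c̄ for real constants c̲, c̄. Then the function λ(x) = ∫_Y g(x,y) q(dy|x) is lower semicontinuous and satisfies c̲ ≤ λ(x) ≤ c̄ for all x. -/

import Mathlib

open MeasureTheory Filter Topology

theorem stmt_8 {X Y : Type*} [MetricSpace X] [TopologicalSpace.SeparableSpace X]
    [MetricSpace Y] [TopologicalSpace.SeparableSpace Y]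
    [MeasurableSpace Y] [BorelSpace Y]
    (q : X → ProbabilityMeasure Y) (hq : Continuous q)
    (g : X × Y → ℝ) (hg : LowerSemicontinuous g)
    (cl cu : ℝ) (hb : ∀ p, cl ≤ g p ∧ g p ≤ cu) :
    LowerSemicontinuous (fun x => ∫ y, g (x, y) ∂(q x : Measure Y)) ∧
      ∀ x, cl ≤ (∫ y, g (x, y) ∂(q x : Measure Y)) ∧
        (∫ y, g (x, y) ∂(q x : Measure Y)) ≤ cu := by
  rcases isEmpty_or_nonempty X with hX | hX
  · exact ⟨fun x => (IsEmpty.false x).elim, fun x => (IsEmpty.false x).elim⟩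
  haveI : Nonempty Y := ProbabilityMeasure.nonempty (q (Classical.arbitrary X))
  haveI : Nonempty (X × Y) := ⟨(Classical.arbitrary X, Classical.arbitrary Y)⟩
  -- Moreau–Yosida approximation
  set G : ℕ → X × Y → ℝ := fun k p => ⨅ p', (g p' + k * dist p p') with hGdef
  have hbdd : ∀ (k : ℕ) (p : X × Y), BddBelow (Set.range fun p' => g p' + (k : ℝ) * dist p p') := by
    intro k p
    exact ⟨cl, fun r ⟨p', hp'⟩ => hp' ▸ le_add_of_le_of_nonneg (hb p').1
      (mul_nonneg (Nat.cast_nonneg k) dist_nonneg)⟩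
  have hG_le : ∀ k p, G k p ≤ g p := by
    intro k p
    simpa using ciInf_le (hbdd k p) p
  have hcl_le : ∀ k p, cl ≤ G k p := by
    intro k p
    exact le_ciInf fun p' => le_add_of_le_of_nonneg (hb p').1
      (mul_nonneg (Nat.cast_nonneg k) dist_nonneg)
  have hlip : ∀ k : ℕ, LipschitzWith k (G k) := by
    intro k
    apply LipschitzWith.of_le_add_mul
    intro p r
    rw [← sub_le_iff_le_add]
    refine le_ciInf fun p' => ?_
    rw [sub_le_iff_le_add]
    calc G k p ≤ g p' + k * dist p p' := ciInf_le (hbdd k p) p'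
      _ ≤ g p' + k * (dist r p' + dist p r) := by
          have hd : dist p p' ≤ dist r p' + dist p r := by
            have := dist_triangle p r p'
            linarith
          have := mul_le_mul_of_nonneg_left hd (Nat.cast_nonneg (α := ℝ) k)
          linarith
      _ = g p' + ↑k * dist r p' + ↑k * dist p r := by ring
  have hmono : ∀ p, Monotone fun k : ℕ => G k p := by
    intro p k l hkl
    refine le_ciInf fun p' => (ciInf_le (hbdd k p) p').trans ?_
    have : (k : ℝ) * dist p p' ≤ (l : ℝ) * dist p p' :=
      mul_le_mul_of_nonneg_right (by exact_mod_cast hkl) dist_nonneg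
    linarith
  have htend : ∀ p, Tendsto (fun k : ℕ => G k p) atTop (𝓝 (g p)) := by
    intro p
    have hba : BddAbove (Set.range fun k : ℕ => G k p) :=
      ⟨g p, fun r ⟨k, hk⟩ => hk ▸ hG_le k p⟩
    have h1 := tendsto_atTop_ciSup (hmono p) hba
    have h2 : (⨆ k : ℕ, G k p) = g p := by
      refine le_antisymm (ciSup_le fun k => hG_le k p) ?_
      refine le_of_forall_lt fun c hc => ?_
      obtain ⟨c', hcc', hc'⟩ := exists_between hc
      -- lower semicontinuity gives a δ-ball where g > c'
      have := hg p c' hc'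
      rw [Metric.eventually_nhds_iff] at this
      obtain ⟨δ, hδ, hball⟩ := this
      obtain ⟨k, hk⟩ := exists_nat_ge ((c' - cl) / δ)
      have hk' : c' - cl ≤ k * δ := by
        rw [div_le_iff₀ hδ] at hk
        linarith
      have : c' ≤ G k p := by
        refine le_ciInf fun p' => ?_
        rcases lt_or_ge (dist p' p) δ with h | h
        · exact le_add_of_le_of_nonneg (hball h).le
            (mul_nonneg (Nat.cast_nonneg k) dist_nonneg)
        · have : (k : ℝ) * δ ≤ k * dist p p' := by
            rw [dist_comm p p']
            exact mul_le_mul_of_nonneg_left h (Nat.cast_nonneg k)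
          linarith [(hb p').1]
      calc c < c' := hcc'
        _ ≤ G k p := this
        _ ≤ ⨆ k : ℕ, G k p := le_ciSup hba k
    rwa [h2] at h1
  -- integrability facts
  have hGcont : ∀ k, Continuous (G k) := fun k => (hlip k).continuous
  have hGy : ∀ k x, Integrable (fun y => G k (x, y)) (q x : Measure Y) := by
    intro k x
    refine Integrable.mono' (integrable_const (max |cl| |cu|))
      (((hGcont k).comp (Continuous.prodMk_right x)).aestronglyMeasurable) ?_
    refine Eventually.of_forall fun y => abs_le.mpr ⟨?_, ?_⟩
    · exact le_trans (neg_le_neg (le_max_left _ _)) (neg_abs_le cl |>.trans (hcl_le k (x, y)))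
    · exact le_trans ((hG_le k (x, y)).trans (hb (x, y)).2) ((le_abs_self cu).trans (le_max_right _ _))
  have hgy : ∀ x, Integrable (fun y => g (x, y)) (q x : Measure Y) := by
    intro x
    have hlsc : LowerSemicontinuous fun y => g (x, y) := by
      intro y t ht
      have := hg (x, y) t ht
      exact ((Continuous.prodMk_right x).tendsto y).eventually this
    refine Integrable.mono' (integrable_const (max |cl| |cu|))
      hlsc.measurable.aestronglyMeasurable ?_
    refine Eventually.of_forall fun y => abs_le.mpr ⟨?_, ?_⟩
    · exact le_trans (neg_le_neg (le_max_left _ _)) ((neg_abs_le cl).trans (hb (x, y)).1)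
    · exact le_trans (hb (x, y)).2 ((le_abs_self cu).trans (le_max_right _ _))
  -- the approximating integrals
  set Λ : ℕ → X → ℝ := fun k x => ∫ y, G k (x, y) ∂(q x : Measure Y) with hΛdef
  have hΛ_le : ∀ k x, Λ k x ≤ ∫ y, g (x, y) ∂(q x : Measure Y) := by
    intro k x
    exact integral_mono (hGy k x) (hgy x) fun y => hG_le k (x, y)
  have hΛ_tendsto : ∀ x, Tendsto (fun k => Λ k x) atTop
      (𝓝 (∫ y, g (x, y) ∂(q x : Measure Y))) := by
    intro x
    exact integral_tendsto_of_tendsto_of_monotone (fun k => hGy k x) (hgy x)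
      (Eventually.of_forall fun y k l hkl => hmono (x, y) hkl)
      (Eventually.of_forall fun y => htend (x, y))
  have hΛ_cont : ∀ k, Continuous (Λ k) := by
    intro k
    rw [continuous_iff_continuousAt]
    intro x₀
    -- bounded continuous function y ↦ G k (x₀, y)
    set F : BoundedContinuousFunction Y ℝ :=
      ⟨⟨fun y => G k (x₀, y), (hGcont k).comp (Continuous.prodMk_right x₀)⟩,
        ⟨cu - cl, fun y y' => by
          have h1 := hcl_le k (x₀, y); have h2 := (hG_le k (x₀, y)).trans (hb (x₀, y)).2
          have h3 := hcl_le k (x₀, y'); have h4 := (hG_le k (x₀, y')).trans (hb (x₀, y')).2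
          rw [Real.dist_eq, abs_le]; constructor <;> linarith⟩⟩ with hF
    have hweak : Tendsto (fun x => ∫ y, F y ∂(q x : Measure Y)) (𝓝 x₀)
        (𝓝 (∫ y, F y ∂(q x₀ : Measure Y))) :=
      ProbabilityMeasure.tendsto_iff_forall_integral_tendsto.mp (hq.tendsto x₀) F
    have hFval : ∀ y, F y = G k (x₀, y) := fun y => rfl
    have hdiff : Tendsto (fun x => Λ k x - ∫ y, G k (x₀, y) ∂(q x : Measure Y)) (𝓝 x₀)
        (𝓝 0) := by
      have hbound : ∀ x, ‖Λ k x - ∫ y, G k (x₀, y) ∂(q x : Measure Y)‖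
          ≤ k * dist x x₀ := by
        intro x
        rw [hΛdef]
        have hFy : Integrable (fun y => G k (x₀, y)) (q x : Measure Y) := by
          refine Integrable.mono' (integrable_const (max |cl| |cu|))
            (((hGcont k).comp (Continuous.prodMk_right x₀)).aestronglyMeasurable) ?_
          refine Eventually.of_forall fun y => abs_le.mpr ⟨?_, ?_⟩
          · exact le_trans (neg_le_neg (le_max_left _ _))
              ((neg_abs_le cl).trans (hcl_le k (x₀, y)))
          · exact le_trans ((hG_le k (x₀, y)).trans (hb (x₀, y)).2)
              ((le_abs_self cu).trans (le_max_right _ _))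
        rw [← integral_sub (hGy k x) hFy]
        calc ‖∫ y, (G k (x, y) - G k (x₀, y)) ∂(q x : Measure Y)‖
            ≤ (k * dist x x₀) * ((q x : Measure Y) Set.univ).toReal := by
              refine norm_integral_le_of_norm_le_const (Eventually.of_forall fun y => ?_)
              have h1 := (hlip k).dist_le_mul (x, y) (x₀, y)
              have h2 : dist (x, y) (x₀, y) = dist x x₀ := by
                simp [Prod.dist_eq, dist_self, dist_nonneg]
              rw [h2] at h1
              simpa [Real.dist_eq] using h1
          _ = k * dist x x₀ := by rw [measure_univ, ENNReal.toReal_one, mul_one]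
      have h0 : Tendsto (fun x => (k : ℝ) * dist x x₀) (𝓝 x₀) (𝓝 0) := by
        have : Tendsto (fun x => dist x x₀) (𝓝 x₀) (𝓝 0) :=
          (continuous_id.dist continuous_const).tendsto' x₀ 0 (dist_self x₀)
        simpa using this.const_mul (k : ℝ)
      exact squeeze_zero_norm hbound h0
    have : Tendsto (fun x => (Λ k x - ∫ y, G k (x₀, y) ∂(q x : Measure Y))
        + ∫ y, G k (x₀, y) ∂(q x : Measure Y)) (𝓝 x₀) (𝓝 (0 + Λ k x₀)) := by
      refine Tendsto.add hdiff ?_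
      simpa [hF, hΛdef] using hweak
    exact (by simpa using this : Tendsto (fun x => Λ k x) (𝓝 x₀) (𝓝 (Λ k x₀)))
  constructor
  · -- lower semicontinuity
    intro x₀ t ht
    obtain ⟨k, hk⟩ := ((hΛ_tendsto x₀).eventually (eventually_gt_nhds ht)).exists
    have hev : ∀ᶠ x in 𝓝 x₀, t < Λ k x :=
      ((hΛ_cont k).tendsto x₀).eventually (eventually_gt_nhds hk)
    filter_upwards [hev] with x hx
    exact hx.trans_le (hΛ_le k x)
  · intro x
    constructor
    · calc cl = ∫ _, cl ∂(q x : Measure Y) := by simp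
        _ ≤ ∫ y, g (x, y) ∂(q x : Measure Y) :=
          integral_mono (integrable_const cl) (hgy x) fun y => (hb (x, y)).1
    · calc ∫ y, g (x, y) ∂(q x : Measure Y) ≤ ∫ _, cu ∂(q x : Measure Y) :=
          integral_mono (hgy x) (integrable_const cu) fun y => (hb (x, y)).2
        _ = cu := by simp
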